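/- arXiv:1011.4252 — 6 statements merged into one kernel-verified Lean document; each statement's English description precedes it below -/
import Mathlib

section
/- Let {A_i} be a finite family of Hermitian n×n complex matrices such that any two distinct members have mutually orthogonal support (i.e. A_i A_j = 0 for i ≠ j), and let {B_i} be Hermitian m×m complex matrices. Then |∑_i A_i ⊗ B_i| = ∑_i |A_i| ⊗ |B_i|, where ⊗ is the Kronecker product and |M| := √(M† M) is the matrix absolute value. -/
/-!
Write `M = ∑ i, A i ⊗ B i` and `S = ∑ i, |A i| ⊗ |B i|`; both sides are identified through the
continuous functional calculus, `|M| = √(Mᴴ M)`, so it suffices to show that `S` is positive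
semidefinite with `S * S = Mᴴ M`. Since `A i * A j = 0` for `i ≠ j`, also
`|A i| * |A j| = 0` (for Hermitian `P`, `Q`, `P² Q² = 0` forces `(PQ)ᴴ(PQ) = Q P² Q` to square to
zero), and the cross terms vanish from both products, leaving
`∑ i, |A i|² ⊗ |B i|² = ∑ i, A i² ⊗ B i² = M * M = Mᴴ M`.
-/

open Matrix Kronecker
open scoped ComplexOrder

/-- The matrix absolute value `|M| := √(Mᴴ M)`, the positive semidefinite
square root of `Mᴴ M`. -/
noncomputable def matAbs {n : Type*} [Fintype n] [DecidableEq n]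
    (M : Matrix n n ℂ) : Matrix n n ℂ :=
  (Matrix.posSemidef_conjTranspose_mul_self M).1.eigenvectorUnitary.1 *
    diagonal ((↑) ∘ (√·) ∘ (Matrix.posSemidef_conjTranspose_mul_self M).1.eigenvalues) *
    (star (Matrix.posSemidef_conjTranspose_mul_self M).1.eigenvectorUnitary : Matrix n n ℂ)

open scoped MatrixOrder

lemma matAbs_eq_cfcAbs {n : Type*} [Fintype n] [DecidableEq n] (M : Matrix n n ℂ) :
    matAbs M = CFC.abs M := by
  have h := posSemidef_conjTranspose_mul_self M
  rw [CFC.abs, star_eq_conjTranspose, CFC.sqrt_eq_real_sqrt _ h.nonneg, cfcₙ_eq_cfc, h.1.cfc_eq]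
  rfl

namespace Matrix

lemma IsHermitian.mul_eq_zero_of_mul_self_mul_mul_self_eq_zero {n R : Type*} [Fintype n]
    [PartialOrder R] [CommRing R] [StarRing R] [StarOrderedRing R] [NoZeroDivisors R]
    {P Q : Matrix n n R} (hP : P.IsHermitian) (hQ : Q.IsHermitian) (h : P * P * (Q * Q) = 0) :
    P * Q = 0 := by
  have hPQ : (P * Q)ᴴ * (P * Q) = Q * (P * P) * Q := by
    rw [conjTranspose_mul, hP.eq, hQ.eq]; noncomm_ring
  have hsq : (Q * (P * P) * Q)ᴴ * (Q * (P * P) * Q) = 0 := by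
    rw [← hPQ, conjTranspose_mul, conjTranspose_conjTranspose, hPQ]
    calc Q * (P * P) * Q * (Q * (P * P) * Q) = Q * (P * P * (Q * Q)) * (P * P) * Q := by
          noncomm_ring
      _ = 0 := by rw [h]; simp
  rw [← conjTranspose_mul_self_eq_zero, hPQ, ← conjTranspose_mul_self_eq_zero, hsq]

lemma cfcAbs_mul_cfcAbs_eq_zero {n 𝕜 : Type*} [Fintype n] [DecidableEq n] [RCLike 𝕜]
    {A B : Matrix n n 𝕜} (hA : A.IsHermitian) (hB : B.IsHermitian) (hAB : A * B = 0) :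
    CFC.abs A * CFC.abs B = 0 := by
  refine IsHermitian.mul_eq_zero_of_mul_self_mul_mul_self_eq_zero
    (CFC.abs_nonneg A).posSemidef.1 (CFC.abs_nonneg B).posSemidef.1 ?_
  rw [CFC.abs_mul_abs, CFC.abs_mul_abs, star_eq_conjTranspose, star_eq_conjTranspose, hA.eq,
    hB.eq, mul_assoc, ← mul_assoc A B B, hAB, zero_mul, mul_zero]

lemma sum_kronecker_mul_sum_kronecker {ι l m R : Type*} [Fintype ι] [Fintype l] [Fintype m]
    [CommSemiring R] {X Z : ι → Matrix l l R} {Y W : ι → Matrix m m R}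
    (h : ∀ i j, i ≠ j → X i * Z j = 0) :
    (∑ i, X i ⊗ₖ Y i) * (∑ i, Z i ⊗ₖ W i) = ∑ i, (X i * Z i) ⊗ₖ (Y i * W i) := by
  rw [Finset.sum_mul_sum]
  refine Fintype.sum_congr _ _ fun i => ?_
  rw [Fintype.sum_eq_single i fun j hji => by rw [← mul_kronecker_mul, h i j hji.symm,
    zero_kronecker], mul_kronecker_mul]

end Matrix

/-- For a finite family of Hermitian matrices `A i` with pairwise orthogonal
supports (`A i * A j = 0` for `i ≠ j`) and Hermitian matrices `B i`, the
absolute value of `∑ i, A i ⊗ B i` is `∑ i, |A i| ⊗ |B i|`. -/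
theorem abs_sum_kronecker_of_orthogonal_supports
    {ι n m : Type*} [Fintype ι] [Fintype n] [DecidableEq n]
    [Fintype m] [DecidableEq m]
    (A : ι → Matrix n n ℂ) (B : ι → Matrix m m ℂ)
    (hA : ∀ i, (A i).IsHermitian) (hB : ∀ i, (B i).IsHermitian)
    (horth : ∀ i j, i ≠ j → A i * A j = 0) :
    matAbs (∑ i, (A i) ⊗ₖ (B i)) = ∑ i, (matAbs (A i)) ⊗ₖ (matAbs (B i)) := by
  simp only [matAbs_eq_cfcAbs]
  have hM : (∑ i, A i ⊗ₖ B i)ᴴ = ∑ i, A i ⊗ₖ B i := by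
    simp only [conjTranspose_sum, conjTranspose_kronecker, (hA _).eq, (hB _).eq]
  have hS : 0 ≤ ∑ i, CFC.abs (A i) ⊗ₖ CFC.abs (B i) := Finset.sum_nonneg fun i _ =>
    ((CFC.abs_nonneg _).posSemidef.kronecker (CFC.abs_nonneg _).posSemidef).nonneg
  refine CFC.sqrt_unique ?_ hS
  rw [sum_kronecker_mul_sum_kronecker fun i j hij => cfcAbs_mul_cfcAbs_eq_zero (hA i) (hA j)
      (horth i j hij), star_eq_conjTranspose, hM, sum_kronecker_mul_sum_kronecker horth]
  simp only [CFC.abs_mul_abs, star_eq_conjTranspose, (hA _).eq, (hB _).eq]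
end

section
/- Let μ be the Haar probability measure on the compact group SU(2) of 2×2 special unitary matrices, and define the G-twirling map on 8×8 complex matrices by G(ρ) := ∫_{SU(2)} (U ⊗ U ⊗ U) ρ (U ⊗ U ⊗ U)† dμ(U), where ⊗ is the Kronecker product. Then for every V ∈ SU(2) and every 8×8 complex matrix ρ, G((V ⊗ V ⊗ I₂) ρ (V ⊗ V ⊗ I₂)†) = G((I₂ ⊗ I₂ ⊗ V†) ρ (I₂ ⊗ I₂ ⊗ V)). That is, a rigid rotation of the first two tensor factors (the quantum reference frame) is equivalent under G-twirling to the inverse rotation applied to the third factor (the system). -/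
/-!
The identity `V ⊗ V ⊗ I₂ = (V ⊗ V ⊗ V)(I₂ ⊗ I₂ ⊗ V†)` turns the left-hand side into the twirl of
the right-hand side conjugated by `V ⊗ V ⊗ V`, and twirling absorbs such a conjugation as soon as
`μ` is right invariant. On a compact group every right translate of a left-invariant probability
measure is again a left-invariant probability measure, hence equal to it by uniqueness of Haar
measure.
-/

open Matrix Kronecker MeasureTheory

/-- The compact group SU(2) of 2×2 special unitary complex matrices. -/
abbrev SU2 : Type := Matrix.specialUnitaryGroup (Fin 2) ℂ

noncomputable instance : MeasurableSpace SU2 := borel SU2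

instance : BorelSpace SU2 := ⟨rfl⟩

/-- The underlying 2×2 matrix of an element of SU(2). -/
def suMat (U : SU2) : Matrix (Fin 2) (Fin 2) ℂ := (U : Matrix (Fin 2) (Fin 2) ℂ)

/-- The index type of `(ℂ²)^{⊗3} ≅ ℂ⁸`. -/
abbrev Q3 : Type := Fin 2 × Fin 2 × Fin 2

/-- The 2×2 identity matrix. -/
def I2 : Matrix (Fin 2) (Fin 2) ℂ := 1

/-- `A ⊗ B ⊗ C` as an 8×8 matrix (Kronecker product). -/
def kron3 (A B C : Matrix (Fin 2) (Fin 2) ℂ) : Matrix Q3 Q3 ℂ :=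
  A ⊗ₖ (B ⊗ₖ C)

/-- The G-twirling map: averaging with respect to a measure `μ` on `SU(2)`,
`G(ρ) := ∫ (U ⊗ U ⊗ U) ρ (U ⊗ U ⊗ U)† dμ(U)` (defined entrywise). -/
noncomputable def Gtwirl (μ : Measure SU2) (ρ : Matrix Q3 Q3 ℂ) : Matrix Q3 Q3 ℂ :=
  Matrix.of fun i j =>
    ∫ U : SU2, (kron3 (suMat U) (suMat U) (suMat U) * ρ *
      (kron3 (suMat U) (suMat U) (suMat U))ᴴ) i j ∂μ

namespace Matrix

variable {n : Type*} [Fintype n] [DecidableEq n]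

instance specialUnitaryGroup.instIsTopologicalGroup {α : Type*} [CommRing α] [StarRing α]
    [TopologicalSpace α] [IsTopologicalRing α] [ContinuousStar α] :
    IsTopologicalGroup (specialUnitaryGroup n α) where
  continuous_inv := continuous_induced_rng.mpr continuous_subtype_val.star

theorem isClosed_specialUnitaryGroup {α : Type*} [CommRing α] [StarRing α] [TopologicalSpace α]
    [IsTopologicalRing α] [ContinuousStar α] [T1Space α] :
    IsClosed (specialUnitaryGroup n α : Set (Matrix n n α)) :=
  (isClosed_unitary (R := Matrix n n α)).inter
    (isClosed_eq continuous_id.matrix_det continuous_const)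

theorem isCompact_specialUnitaryGroup {𝕜 : Type*} [RCLike 𝕜] :
    IsCompact (specialUnitaryGroup n 𝕜 : Set (Matrix n n 𝕜)) := by
  have hball : IsCompact (Set.univ.pi fun _ : n ↦ Set.univ.pi fun _ : n ↦
      Metric.closedBall (0 : 𝕜) 1) :=
    isCompact_univ_pi fun _ ↦ isCompact_univ_pi fun _ ↦ isCompact_closedBall 0 1
  refine hball.of_isClosed_subset isClosed_specialUnitaryGroup fun A hA i _ j _ ↦ ?_
  simpa using entry_norm_bound_of_unitary hA.1 i j

instance specialUnitaryGroup.instCompactSpace {𝕜 : Type*} [RCLike 𝕜] :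
    CompactSpace (specialUnitaryGroup n 𝕜) :=
  isCompact_iff_compactSpace.mp isCompact_specialUnitaryGroup

end Matrix

namespace MeasureTheory.Measure

variable {G : Type*} [Group G] [TopologicalSpace G] [IsTopologicalGroup G] [CompactSpace G]
  [MeasurableSpace G] [BorelSpace G]

theorem isHaarMeasure_of_isProbabilityMeasure (μ : Measure G) [IsProbabilityMeasure μ]
    [IsMulLeftInvariant μ] : IsHaarMeasure μ where

theorem isMulRightInvariant_of_isProbabilityMeasure (μ : Measure G) [IsProbabilityMeasure μ]
    [IsMulLeftInvariant μ] : IsMulRightInvariant μ where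
  map_mul_right_eq_self g := by
    have := isHaarMeasure_of_isProbabilityMeasure μ
    have := isProbabilityMeasure_map (μ := μ) (continuous_mul_const g).aemeasurable
    have := isHaarMeasure_of_isProbabilityMeasure (μ.map (· * g))
    exact isHaarMeasure_eq_of_isProbabilityMeasure _ _

end MeasureTheory.Measure

theorem kron3_mul_kron3 (A B C A' B' C' : Matrix (Fin 2) (Fin 2) ℂ) :
    kron3 A B C * kron3 A' B' C' = kron3 (A * A') (B * B') (C * C') := by
  simp only [kron3, mul_kronecker_mul]

theorem kron3_conjTranspose (A B C : Matrix (Fin 2) (Fin 2) ℂ) :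
    (kron3 A B C)ᴴ = kron3 Aᴴ Bᴴ Cᴴ := by
  simp only [kron3, conjTranspose_kronecker]

theorem suMat_mul (U V : SU2) : suMat (U * V) = suMat U * suMat V := rfl

theorem suMat_mul_conjTranspose (U : SU2) : suMat U * (suMat U)ᴴ = 1 :=
  Unitary.mul_star_self_of_mem U.2.1

theorem kron3_suMat_suMat_I2 (V : SU2) :
    kron3 (suMat V) (suMat V) I2 =
      kron3 (suMat V) (suMat V) (suMat V) * kron3 I2 I2 (suMat V)ᴴ := by
  rw [kron3_mul_kron3, suMat_mul_conjTranspose, I2, mul_one]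

theorem conj_kron3_suMat_suMat_I2 (V : SU2) (ρ : Matrix Q3 Q3 ℂ) :
    kron3 (suMat V) (suMat V) I2 * ρ * (kron3 (suMat V) (suMat V) I2)ᴴ =
      kron3 (suMat V) (suMat V) (suMat V) * (kron3 I2 I2 (suMat V)ᴴ * ρ * kron3 I2 I2 (suMat V)) *
        (kron3 (suMat V) (suMat V) (suMat V))ᴴ := by
  rw [kron3_suMat_suMat_I2, conjTranspose_mul, kron3_conjTranspose I2 I2,
    conjTranspose_conjTranspose, I2, conjTranspose_one]
  simp only [Matrix.mul_assoc]

theorem gtwirl_conj_kron3 (μ : Measure SU2) [μ.IsMulRightInvariant] (W : SU2)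
    (σ : Matrix Q3 Q3 ℂ) :
    Gtwirl μ (kron3 (suMat W) (suMat W) (suMat W) * σ * (kron3 (suMat W) (suMat W) (suMat W))ᴴ) =
      Gtwirl μ σ := by
  ext i j
  simp only [Gtwirl, of_apply]
  conv_rhs => rw [← integral_mul_right_eq_self _ W]
  congr 1 with U
  simp only [suMat_mul, ← kron3_mul_kron3, conjTranspose_mul, Matrix.mul_assoc]

/-- For the Haar probability measure on SU(2) (the left-invariant probability
measure), a rigid rotation `V ⊗ V ⊗ I₂` of the two reference-frame factors before
G-twirling is equivalent to applying the inverse rotation `I₂ ⊗ I₂ ⊗ V†` to the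
system factor: `G((V ⊗ V ⊗ I₂) ρ (V ⊗ V ⊗ I₂)†) = G((I₂ ⊗ I₂ ⊗ V†) ρ (I₂ ⊗ I₂ ⊗ V))`. -/
theorem gtwirl_rigid_rotation_eq_inverse_on_system
    (μ : Measure SU2) [IsProbabilityMeasure μ]
    (hHaar : ∀ V : SU2, μ.map (fun U => V * U) = μ)
    (V : SU2) (ρ : Matrix Q3 Q3 ℂ) :
    Gtwirl μ (kron3 (suMat V) (suMat V) I2 * ρ * (kron3 (suMat V) (suMat V) I2)ᴴ) =
      Gtwirl μ (kron3 I2 I2 (suMat V)ᴴ * ρ * kron3 I2 I2 (suMat V)) := by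
  have : μ.IsMulLeftInvariant := ⟨hHaar⟩
  have := Measure.isMulRightInvariant_of_isProbabilityMeasure μ
  rw [conj_kron3_suMat_suMat_I2, gtwirl_conj_kron3]
end

section
/- The virtual spin observables N_x := (1/√3)(J_2 − J_1)·J_3, N_y := (2/√3)(J_1 × J_2)·J_3, N_z := (1/3)(J_2·J_3 + J_1·J_3 − 2 J_1·J_2) on (ℂ²)^{⊗3} satisfy the su(2) commutation relations [N_x, N_y] = i N_z, [N_y, N_z] = i N_x, and [N_z, N_x] = i N_y. -/
open Matrix Kronecker

/-- The Pauli matrices `σ_x, σ_y, σ_z`. -/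
def pauli : Fin 3 → Matrix (Fin 2) (Fin 2) ℂ :=
  ![!![0, 1; 1, 0], !![0, -Complex.I; Complex.I, 0], !![1, 0; 0, -1]]

/-- `J_a^k := (1/2)σ_k` acting on the `a`-th of three qubits (identity elsewhere). -/
noncomputable def J : Fin 3 → Fin 3 → Matrix Q3 Q3 ℂ :=
  ![fun k => ((1 / 2 : ℂ) • pauli k) ⊗ₖ ((1 : Matrix (Fin 2) (Fin 2) ℂ) ⊗ₖ (1 : Matrix (Fin 2) (Fin 2) ℂ)),
    fun k => (1 : Matrix (Fin 2) (Fin 2) ℂ) ⊗ₖ (((1 / 2 : ℂ) • pauli k) ⊗ₖ (1 : Matrix (Fin 2) (Fin 2) ℂ)),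
    fun k => (1 : Matrix (Fin 2) (Fin 2) ℂ) ⊗ₖ ((1 : Matrix (Fin 2) (Fin 2) ℂ) ⊗ₖ ((1 / 2 : ℂ) • pauli k))]

/-- Dot product `J_a · J_b := ∑_k J_a^k J_b^k`. -/
noncomputable def Jdot (a b : Fin 3) : Matrix Q3 Q3 ℂ := ∑ k : Fin 3, J a k * J b k

/-- The Levi-Civita symbol on `{0,1,2}` (as a complex number). -/
def levi (k l m : Fin 3) : ℂ :=
  if (k, l, m) = (0, 1, 2) ∨ (k, l, m) = (1, 2, 0) ∨ (k, l, m) = (2, 0, 1) then 1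
  else if (k, l, m) = (0, 2, 1) ∨ (k, l, m) = (2, 1, 0) ∨ (k, l, m) = (1, 0, 2) then -1
  else 0

/-- The cross-product expression `(J_a × J_b) · J_c := ∑_{klm} ε_{klm} J_a^k J_b^l J_c^m`. -/
noncomputable def Jcross (a b c : Fin 3) : Matrix Q3 Q3 ℂ :=
  ∑ k : Fin 3, ∑ l : Fin 3, ∑ m : Fin 3, levi k l m • (J a k * J b l * J c m)

/-- The computational basis ket `|abc⟩` of three qubits, as a vector in `ℂ⁸`. -/
def ket3 (a b c : Fin 2) : Q3 → ℂ := fun x => if x = (a, b, c) then 1 else 0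

noncomputable def sectorBasis : Fin 8 → (Q3 → ℂ) :=
  ![ket3 0 0 0,
    (Real.sqrt 3 : ℂ)⁻¹ • (ket3 0 0 1 + ket3 0 1 0 + ket3 1 0 0),
    (Real.sqrt 3 : ℂ)⁻¹ • (ket3 1 1 0 + ket3 1 0 1 + ket3 0 1 1),
    ket3 1 1 1,
    (Real.sqrt 2 : ℂ)⁻¹ • (ket3 0 1 0 - ket3 1 0 0),
    (Real.sqrt 6 : ℂ)⁻¹ • ((2 : ℂ) • ket3 0 0 1 - ket3 0 1 0 - ket3 1 0 0),
    (Real.sqrt 2 : ℂ)⁻¹ • (ket3 0 1 1 - ket3 1 0 1),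
    (Real.sqrt 6 : ℂ)⁻¹ • ((-2 : ℂ) • ket3 1 1 0 + ket3 1 0 1 + ket3 0 1 1)]

/-- The total angular momentum squared `J²_tot := ∑_k (J_1^k + J_2^k + J_3^k)²`. -/
noncomputable def J2tot : Matrix Q3 Q3 ℂ :=
  ∑ k : Fin 3, (J 0 k + J 1 k + J 2 k) * (J 0 k + J 1 k + J 2 k)



section VirtualSpinAux

/-- Permutation-type matrix attached to a map `f : Q3 → Q3`: sends `e_y` to `e_{f y}`. -/
def Pm (f : Q3 → Q3) : Matrix Q3 Q3 ℂ := Matrix.of fun x y => if x = f y then 1 else 0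

lemma Pm_mul (f g : Q3 → Q3) : Pm f * Pm g = Pm (f ∘ g) := by
  ext x y
  simp only [Pm, Matrix.mul_apply, Matrix.of_apply, Function.comp]
  rw [Finset.sum_eq_single (g y)]
  · simp
  · intro z _ hz; simp [hz]
  · simp

def p12 : Q3 → Q3 := fun x => (x.2.1, x.1, x.2.2)
def p13 : Q3 → Q3 := fun x => (x.2.2, x.2.1, x.1)
def p23 : Q3 → Q3 := fun x => (x.1, x.2.2, x.2.1)
def pC : Q3 → Q3 := fun x => (x.2.1, x.2.2, x.1)
def pC2 : Q3 → Q3 := fun x => (x.2.2, x.1, x.2.1)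

lemma c1 : p23 ∘ pC2 = p13 := rfl
lemma c2 : p23 ∘ pC = p12 := rfl
lemma c3 : p13 ∘ pC2 = p12 := rfl
lemma c4 : p13 ∘ pC = p23 := rfl
lemma c5 : pC2 ∘ p23 = p12 := rfl
lemma c6 : pC ∘ p23 = p13 := rfl
lemma c7 : pC2 ∘ p13 = p23 := rfl
lemma c8 : pC ∘ p13 = p12 := rfl
lemma c9 : pC2 ∘ p12 = p13 := rfl
lemma c10 : pC ∘ p12 = p23 := rfl
lemma c11 : p12 ∘ pC2 = p23 := rfl
lemma c12 : p12 ∘ pC = p13 := rfl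
lemma c13 : p23 ∘ p13 = pC2 := rfl
lemma c14 : p13 ∘ p23 = pC := rfl
lemma c15 : p23 ∘ p12 = pC := rfl
lemma c16 : p12 ∘ p23 = pC2 := rfl
lemma c17 : p13 ∘ p12 = pC2 := rfl
lemma c18 : p12 ∘ p13 = pC := rfl
lemma c19 : p23 ∘ p23 = id := rfl
lemma c20 : p13 ∘ p13 = id := rfl
lemma c21 : p12 ∘ p12 = id := rfl

lemma J01 (k : Fin 3) : J 0 k * J 1 k =
    ((1/2:ℂ) • pauli k) ⊗ₖ (((1/2:ℂ) • pauli k) ⊗ₖ (1 : Matrix (Fin 2) (Fin 2) ℂ)) := by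
  simp only [_root_.J, Matrix.cons_val_zero, Matrix.cons_val_one, Matrix.head_cons,
    ← Matrix.mul_kronecker_mul, Matrix.mul_one, Matrix.one_mul]

lemma J02 (k : Fin 3) : J 0 k * J 2 k =
    ((1/2:ℂ) • pauli k) ⊗ₖ ((1 : Matrix (Fin 2) (Fin 2) ℂ) ⊗ₖ ((1/2:ℂ) • pauli k)) := by
  simp only [_root_.J, Matrix.cons_val_zero, Matrix.cons_val_one, Matrix.head_cons,
    Matrix.cons_val_two, Matrix.tail_cons,
    ← Matrix.mul_kronecker_mul, Matrix.mul_one, Matrix.one_mul]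

lemma J12 (k : Fin 3) : J 1 k * J 2 k =
    (1 : Matrix (Fin 2) (Fin 2) ℂ) ⊗ₖ (((1/2:ℂ) • pauli k) ⊗ₖ ((1/2:ℂ) • pauli k)) := by
  simp only [_root_.J, Matrix.cons_val_zero, Matrix.cons_val_one, Matrix.head_cons,
    Matrix.cons_val_two, Matrix.tail_cons,
    ← Matrix.mul_kronecker_mul, Matrix.mul_one, Matrix.one_mul]

lemma J012 (k l m : Fin 3) : J 0 k * J 1 l * J 2 m =
    ((1/2:ℂ) • pauli k) ⊗ₖ (((1/2:ℂ) • pauli l) ⊗ₖ ((1/2:ℂ) • pauli m)) := by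
  simp only [_root_.J, Matrix.cons_val_zero, Matrix.cons_val_one, Matrix.head_cons,
    Matrix.cons_val_two, Matrix.tail_cons,
    ← Matrix.mul_kronecker_mul, Matrix.mul_one, Matrix.one_mul]

set_option maxHeartbeats 1000000 in
lemma hd01 : Jdot 0 1 = (1/2:ℂ) • Pm p12 - (1/4:ℂ) • 1 := by
  simp only [Jdot, J01]
  ext ⟨a, b, c⟩ ⟨d, e, f⟩
  simp only [Matrix.sum_apply, Fin.sum_univ_three, Matrix.kroneckerMap_apply, Matrix.smul_apply,
    Matrix.sub_apply, Matrix.one_apply, Pm, Matrix.of_apply, p12, pauli, smul_eq_mul,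
    Matrix.cons_val_zero, Matrix.cons_val_one, Matrix.head_cons, Matrix.cons_val_two,
    Matrix.tail_cons]
  fin_cases a <;> fin_cases b <;> fin_cases c <;> fin_cases d <;> fin_cases e <;> fin_cases f <;>
    norm_num [Prod.ext_iff, Complex.ext_iff, Matrix.cons_val_zero, Matrix.cons_val_one,
      Matrix.head_cons]

set_option maxHeartbeats 1000000 in
lemma hd02 : Jdot 0 2 = (1/2:ℂ) • Pm p13 - (1/4:ℂ) • 1 := by
  simp only [Jdot, J02]
  ext ⟨a, b, c⟩ ⟨d, e, f⟩
  simp only [Matrix.sum_apply, Fin.sum_univ_three, Matrix.kroneckerMap_apply, Matrix.smul_apply,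
    Matrix.sub_apply, Matrix.one_apply, Pm, Matrix.of_apply, p13, pauli, smul_eq_mul,
    Matrix.cons_val_zero, Matrix.cons_val_one, Matrix.head_cons, Matrix.cons_val_two,
    Matrix.tail_cons]
  fin_cases a <;> fin_cases b <;> fin_cases c <;> fin_cases d <;> fin_cases e <;> fin_cases f <;>
    norm_num [Prod.ext_iff, Complex.ext_iff, Matrix.cons_val_zero, Matrix.cons_val_one,
      Matrix.head_cons]

set_option maxHeartbeats 1000000 in
lemma hd12 : Jdot 1 2 = (1/2:ℂ) • Pm p23 - (1/4:ℂ) • 1 := by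
  simp only [Jdot, J12]
  ext ⟨a, b, c⟩ ⟨d, e, f⟩
  simp only [Matrix.sum_apply, Fin.sum_univ_three, Matrix.kroneckerMap_apply, Matrix.smul_apply,
    Matrix.sub_apply, Matrix.one_apply, Pm, Matrix.of_apply, p23, pauli, smul_eq_mul,
    Matrix.cons_val_zero, Matrix.cons_val_one, Matrix.head_cons, Matrix.cons_val_two,
    Matrix.tail_cons]
  fin_cases a <;> fin_cases b <;> fin_cases c <;> fin_cases d <;> fin_cases e <;> fin_cases f <;>
    norm_num [Prod.ext_iff, Complex.ext_iff, Matrix.cons_val_zero, Matrix.cons_val_one,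
      Matrix.head_cons]

lemma lv000 : levi 0 0 0 = 0 := by
  norm_num [levi, Prod.ext_iff, Fin.ext_iff]

lemma lv001 : levi 0 0 1 = 0 := by
  norm_num [levi, Prod.ext_iff, Fin.ext_iff]

lemma lv002 : levi 0 0 2 = 0 := by
  norm_num [levi, Prod.ext_iff, Fin.ext_iff]

lemma lv010 : levi 0 1 0 = 0 := by
  norm_num [levi, Prod.ext_iff, Fin.ext_iff]

lemma lv011 : levi 0 1 1 = 0 := by
  norm_num [levi, Prod.ext_iff, Fin.ext_iff]

lemma lv012 : levi 0 1 2 = 1 := by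
  norm_num [levi, Prod.ext_iff, Fin.ext_iff]

lemma lv020 : levi 0 2 0 = 0 := by
  norm_num [levi, Prod.ext_iff, Fin.ext_iff]

lemma lv021 : levi 0 2 1 = (-1) := by
  norm_num [levi, Prod.ext_iff, Fin.ext_iff]

lemma lv022 : levi 0 2 2 = 0 := by
  norm_num [levi, Prod.ext_iff, Fin.ext_iff]

lemma lv100 : levi 1 0 0 = 0 := by
  norm_num [levi, Prod.ext_iff, Fin.ext_iff]

lemma lv101 : levi 1 0 1 = 0 := by
  norm_num [levi, Prod.ext_iff, Fin.ext_iff]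

lemma lv102 : levi 1 0 2 = (-1) := by
  norm_num [levi, Prod.ext_iff, Fin.ext_iff]

lemma lv110 : levi 1 1 0 = 0 := by
  norm_num [levi, Prod.ext_iff, Fin.ext_iff]

lemma lv111 : levi 1 1 1 = 0 := by
  norm_num [levi, Prod.ext_iff, Fin.ext_iff]

lemma lv112 : levi 1 1 2 = 0 := by
  norm_num [levi, Prod.ext_iff, Fin.ext_iff]

lemma lv120 : levi 1 2 0 = 1 := by
  norm_num [levi, Prod.ext_iff, Fin.ext_iff]

lemma lv121 : levi 1 2 1 = 0 := by
  norm_num [levi, Prod.ext_iff, Fin.ext_iff]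

lemma lv122 : levi 1 2 2 = 0 := by
  norm_num [levi, Prod.ext_iff, Fin.ext_iff]

lemma lv200 : levi 2 0 0 = 0 := by
  norm_num [levi, Prod.ext_iff, Fin.ext_iff]

lemma lv201 : levi 2 0 1 = 1 := by
  norm_num [levi, Prod.ext_iff, Fin.ext_iff]

lemma lv202 : levi 2 0 2 = 0 := by
  norm_num [levi, Prod.ext_iff, Fin.ext_iff]

lemma lv210 : levi 2 1 0 = (-1) := by
  norm_num [levi, Prod.ext_iff, Fin.ext_iff]

lemma lv211 : levi 2 1 1 = 0 := by
  norm_num [levi, Prod.ext_iff, Fin.ext_iff]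

lemma lv212 : levi 2 1 2 = 0 := by
  norm_num [levi, Prod.ext_iff, Fin.ext_iff]

lemma lv220 : levi 2 2 0 = 0 := by
  norm_num [levi, Prod.ext_iff, Fin.ext_iff]

lemma lv221 : levi 2 2 1 = 0 := by
  norm_num [levi, Prod.ext_iff, Fin.ext_iff]

lemma lv222 : levi 2 2 2 = 0 := by
  norm_num [levi, Prod.ext_iff, Fin.ext_iff]

set_option maxHeartbeats 1600000 in
lemma hcr : Jcross 0 1 2 = (Complex.I/4) • (Pm pC2 - Pm pC) := by
  have h6 : Jcross 0 1 2 =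
      J 0 0 * J 1 1 * J 2 2 - J 0 0 * J 1 2 * J 2 1
      - J 0 1 * J 1 0 * J 2 2 + J 0 1 * J 1 2 * J 2 0
      + J 0 2 * J 1 0 * J 2 1 - J 0 2 * J 1 1 * J 2 0 := by
    simp only [Jcross, Fin.sum_univ_three, lv000, lv001, lv002, lv010, lv011, lv012, lv020, lv021, lv022, lv100, lv101, lv102, lv110, lv111, lv112, lv120, lv121, lv122, lv200, lv201, lv202, lv210, lv211, lv212, lv220, lv221, lv222,
      zero_smul, one_smul, neg_smul, add_zero, zero_add]
    abel
  rw [h6]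
  simp only [J012]
  ext ⟨a, b, c⟩ ⟨d, e, f⟩
  simp only [Matrix.kroneckerMap_apply, Matrix.smul_apply, Matrix.sub_apply, Matrix.add_apply,
    Pm, Matrix.of_apply, pC, pC2, pauli, smul_eq_mul,
    Matrix.cons_val_zero, Matrix.cons_val_one, Matrix.head_cons, Matrix.cons_val_two,
    Matrix.tail_cons]
  fin_cases a <;> fin_cases b <;> fin_cases c <;> fin_cases d <;> fin_cases e <;> fin_cases f <;>
    norm_num [Prod.ext_iff, Complex.ext_iff, Matrix.cons_val_zero, Matrix.cons_val_one,
      Matrix.head_cons]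

end VirtualSpinAux

/-- The virtual spin observable `N_x := (1/√3)(J_2 − J_1)·J_3`. -/
noncomputable def Nx : Matrix Q3 Q3 ℂ :=
  (Real.sqrt 3 : ℂ)⁻¹ • (Jdot 1 2 - Jdot 0 2)

/-- The virtual spin observable `N_y := (2/√3)(J_1 × J_2)·J_3`. -/
noncomputable def Ny : Matrix Q3 Q3 ℂ :=
  ((2 : ℂ) / (Real.sqrt 3 : ℂ)) • Jcross 0 1 2

/-- The virtual spin observable `N_z := (1/3)(J_2·J_3 + J_1·J_3 − 2 J_1·J_2)`. -/
noncomputable def Nz : Matrix Q3 Q3 ℂ :=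
  (1 / 3 : ℂ) • (Jdot 1 2 + Jdot 0 2 - (2 : ℂ) • Jdot 0 1)

/-- The virtual spin observables satisfy the `su(2)` commutation relations
`[N_x, N_y] = i N_z`, `[N_y, N_z] = i N_x`, `[N_z, N_x] = i N_y`. -/
theorem virtual_spin_su2_commutation_relations :
    Nx * Ny - Ny * Nx = Complex.I • Nz ∧
    Ny * Nz - Nz * Ny = Complex.I • Nx ∧
    Nz * Nx - Nx * Nz = Complex.I • Ny := by
  have hA : Nx = ((Real.sqrt 3 : ℂ)⁻¹/2) • (Pm p23 - Pm p13) := by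
    rw [Nx, hd12, hd02]; module
  have hB : Ny = ((Real.sqrt 3 : ℂ)⁻¹/2) • (Complex.I • (Pm pC2 - Pm pC)) := by
    rw [Ny, hcr]; try match_scalars <;> (first | ring1 | linear_combination (6:ℂ) * Complex.I_mul_I | linear_combination (-6:ℂ) * Complex.I_mul_I | linear_combination (2:ℂ) * Complex.I_mul_I | linear_combination (-2:ℂ) * Complex.I_mul_I | linear_combination Complex.I_mul_I | linear_combination (-1:ℂ) * Complex.I_mul_I)
  have hC : Nz = (1/6 : ℂ) • (Pm p23 + Pm p13 - (2:ℂ) • Pm p12) := by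
    rw [Nz, hd12, hd02, hd01]; module
  have hs2 : ((Real.sqrt 3 : ℂ)⁻¹/2) * ((Real.sqrt 3 : ℂ)⁻¹/2) = 1/12 := by
    have h3 : ((Real.sqrt 3 : ℝ) : ℂ) * ((Real.sqrt 3 : ℝ) : ℂ) = 3 := by
      rw [← Complex.ofReal_mul, Real.mul_self_sqrt (by norm_num)]; norm_num
    have hne : ((Real.sqrt 3 : ℝ) : ℂ) ≠ 0 := by
      intro h; rw [h] at h3; norm_num at h3
    have hinv : ((Real.sqrt 3 : ℝ) : ℂ)⁻¹ * ((Real.sqrt 3 : ℝ) : ℂ)⁻¹ = 1/3 := by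
      rw [← mul_inv, h3]; norm_num
    calc ((Real.sqrt 3 : ℂ)⁻¹/2) * ((Real.sqrt 3 : ℂ)⁻¹/2)
        = ((Real.sqrt 3 : ℂ)⁻¹ * (Real.sqrt 3 : ℂ)⁻¹) / 4 := by ring
      _ = 1/12 := by rw [hinv]; norm_num
  set A : Matrix Q3 Q3 ℂ := Pm p23 - Pm p13 with hA'
  set B : Matrix Q3 Q3 ℂ := Complex.I • (Pm pC2 - Pm pC) with hB'
  set C : Matrix Q3 Q3 ℂ := Pm p23 + Pm p13 - (2:ℂ) • Pm p12 with hC'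
  have L1 : A * B - B * A = (2 * Complex.I) • C := by
    rw [hA', hB', hC']
    simp only [smul_sub, smul_add, smul_smul, sub_mul, mul_sub, add_mul, mul_add,
      smul_mul_assoc, mul_smul_comm, Matrix.one_mul, Matrix.mul_one, Pm_mul,
      c1, c2, c3, c4, c5, c6, c7, c8, c9, c10, c11, c12, c13, c14, c15, c16, c17, c18,
      c19, c20, c21]
    try match_scalars <;> (first | ring1 | linear_combination (6:ℂ) * Complex.I_mul_I | linear_combination (-6:ℂ) * Complex.I_mul_I | linear_combination (2:ℂ) * Complex.I_mul_I | linear_combination (-2:ℂ) * Complex.I_mul_I | linear_combination Complex.I_mul_I | linear_combination (-1:ℂ) * Complex.I_mul_I)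
  have L2 : B * C - C * B = (6 * Complex.I) • A := by
    rw [hA', hB', hC']
    simp only [smul_sub, smul_add, smul_smul, sub_mul, mul_sub, add_mul, mul_add,
      smul_mul_assoc, mul_smul_comm, Matrix.one_mul, Matrix.mul_one, Pm_mul,
      c1, c2, c3, c4, c5, c6, c7, c8, c9, c10, c11, c12, c13, c14, c15, c16, c17, c18,
      c19, c20, c21]
    try match_scalars <;> (first | ring1 | linear_combination (6:ℂ) * Complex.I_mul_I | linear_combination (-6:ℂ) * Complex.I_mul_I | linear_combination (2:ℂ) * Complex.I_mul_I | linear_combination (-2:ℂ) * Complex.I_mul_I | linear_combination Complex.I_mul_I | linear_combination (-1:ℂ) * Complex.I_mul_I)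
  have L3 : C * A - A * C = (6 * Complex.I) • B := by
    rw [hA', hB', hC']
    simp only [smul_sub, smul_add, smul_smul, sub_mul, mul_sub, add_mul, mul_add,
      smul_mul_assoc, mul_smul_comm, Matrix.one_mul, Matrix.mul_one, Pm_mul,
      c1, c2, c3, c4, c5, c6, c7, c8, c9, c10, c11, c12, c13, c14, c15, c16, c17, c18,
      c19, c20, c21]
    try match_scalars <;> (first | ring1 | linear_combination (6:ℂ) * Complex.I_mul_I | linear_combination (-6:ℂ) * Complex.I_mul_I | linear_combination (2:ℂ) * Complex.I_mul_I | linear_combination (-2:ℂ) * Complex.I_mul_I | linear_combination Complex.I_mul_I | linear_combination (-1:ℂ) * Complex.I_mul_I)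
  refine ⟨?_, ?_, ?_⟩
  · calc Nx * Ny - Ny * Nx
        = (((Real.sqrt 3 : ℂ)⁻¹/2) * ((Real.sqrt 3 : ℂ)⁻¹/2)) • (A * B - B * A) := by
          rw [hA, hB]
          simp only [smul_mul_assoc, mul_smul_comm, smul_smul, smul_sub]
          try match_scalars <;> (first | ring1 | linear_combination (6:ℂ) * Complex.I_mul_I | linear_combination (-6:ℂ) * Complex.I_mul_I | linear_combination (2:ℂ) * Complex.I_mul_I | linear_combination (-2:ℂ) * Complex.I_mul_I | linear_combination Complex.I_mul_I | linear_combination (-1:ℂ) * Complex.I_mul_I)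
      _ = (1/12 : ℂ) • ((2 * Complex.I) • C) := by rw [hs2, L1]
      _ = Complex.I • Nz := by rw [hC]; try match_scalars <;> (first | ring1 | linear_combination (6:ℂ) * Complex.I_mul_I | linear_combination (-6:ℂ) * Complex.I_mul_I | linear_combination (2:ℂ) * Complex.I_mul_I | linear_combination (-2:ℂ) * Complex.I_mul_I | linear_combination Complex.I_mul_I | linear_combination (-1:ℂ) * Complex.I_mul_I)
  · calc Ny * Nz - Nz * Ny
        = (((Real.sqrt 3 : ℂ)⁻¹/2) * (1/6 : ℂ)) • (B * C - C * B) := by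
          rw [hB, hC]
          simp only [smul_mul_assoc, mul_smul_comm, smul_smul, smul_sub]
          try match_scalars <;> (first | ring1 | linear_combination (6:ℂ) * Complex.I_mul_I | linear_combination (-6:ℂ) * Complex.I_mul_I | linear_combination (2:ℂ) * Complex.I_mul_I | linear_combination (-2:ℂ) * Complex.I_mul_I | linear_combination Complex.I_mul_I | linear_combination (-1:ℂ) * Complex.I_mul_I)
      _ = (((Real.sqrt 3 : ℂ)⁻¹/2) * (1/6 : ℂ)) • ((6 * Complex.I) • A) := by rw [L2]
      _ = Complex.I • Nx := by rw [hA]; try match_scalars <;> (first | ring1 | linear_combination (6:ℂ) * Complex.I_mul_I | linear_combination (-6:ℂ) * Complex.I_mul_I | linear_combination (2:ℂ) * Complex.I_mul_I | linear_combination (-2:ℂ) * Complex.I_mul_I | linear_combination Complex.I_mul_I | linear_combination (-1:ℂ) * Complex.I_mul_I)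
  · calc Nz * Nx - Nx * Nz
        = ((1/6 : ℂ) * ((Real.sqrt 3 : ℂ)⁻¹/2)) • (C * A - A * C) := by
          rw [hA, hC]
          simp only [smul_mul_assoc, mul_smul_comm, smul_smul, smul_sub]
          try match_scalars <;> (first | ring1 | linear_combination (6:ℂ) * Complex.I_mul_I | linear_combination (-6:ℂ) * Complex.I_mul_I | linear_combination (2:ℂ) * Complex.I_mul_I | linear_combination (-2:ℂ) * Complex.I_mul_I | linear_combination Complex.I_mul_I | linear_combination (-1:ℂ) * Complex.I_mul_I)
      _ = ((1/6 : ℂ) * ((Real.sqrt 3 : ℂ)⁻¹/2)) • ((6 * Complex.I) • B) := by rw [L3]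
      _ = Complex.I • Ny := by rw [hB]; try match_scalars <;> (first | ring1 | linear_combination (6:ℂ) * Complex.I_mul_I | linear_combination (-6:ℂ) * Complex.I_mul_I | linear_combination (2:ℂ) * Complex.I_mul_I | linear_combination (-2:ℂ) * Complex.I_mul_I | linear_combination Complex.I_mul_I | linear_combination (-1:ℂ) * Complex.I_mul_I)
end

section
/- For any three qubits and any choice of pairwise distinct indices a, b, c ∈ {1,2,3}, the spin-1/2 operators satisfy the 'order 2 with order 3' identity [J_b·J_c, (J_a × J_b)·J_c] = (i/2) J_a·(J_c − J_b) as operators on (ℂ²)^{⊗3}, where J_a·(J_c − J_b) := J_a·J_c − J_a·J_b. -/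
open Matrix Kronecker

/-! ### Auxiliary machinery: integer-matrix shadow of the spin operators -/

/-- Integer "Pauli" matrices: `σ_x`, `-i σ_y`, `σ_z`. -/
def pauliW : Fin 3 → Matrix (Fin 2) (Fin 2) ℤ :=
  ![!![0, 1; 1, 0], !![0, -1; 1, 0], !![1, 0; 0, -1]]

def JW : Fin 3 → Fin 3 → Matrix Q3 Q3 ℤ :=
  ![fun k => pauliW k ⊗ₖ ((1 : Matrix (Fin 2) (Fin 2) ℤ) ⊗ₖ 1),
    fun k => (1 : Matrix (Fin 2) (Fin 2) ℤ) ⊗ₖ (pauliW k ⊗ₖ 1),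
    fun k => (1 : Matrix (Fin 2) (Fin 2) ℤ) ⊗ₖ ((1 : Matrix (Fin 2) (Fin 2) ℤ) ⊗ₖ pauliW k)]

noncomputable def u : Fin 3 → ℂ := ![1, Complex.I, 1]

lemma pauliEq (k : Fin 3) (i i' : Fin 2) :
    pauli k i i' = u k * ((pauliW k i i' : ℤ) : ℂ) := by
  fin_cases k <;> fin_cases i <;> fin_cases i' <;> simp [pauli, pauliW, u]

lemma L1 (a k : Fin 3) :
    J a k = ((1 / 2 : ℂ) * u k) • (JW a k).map (Int.cast : ℤ → ℂ) := by
  fin_cases a <;>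
    · ext ⟨i, j, l⟩ ⟨i', j', l'⟩
      simp [_root_.J, JW, Matrix.kroneckerMap_apply, Matrix.map_apply, Matrix.one_apply,
        pauliEq, Matrix.smul_apply]
      ring

def DW (a b : Fin 3) : Matrix Q3 Q3 ℤ :=
  JW a 0 * JW b 0 - JW a 1 * JW b 1 + JW a 2 * JW b 2

def KW (a b c : Fin 3) : Matrix Q3 Q3 ℤ :=
  JW a 0 * JW b 1 * JW c 2 + JW a 1 * JW b 2 * JW c 0 + JW a 2 * JW b 0 * JW c 1
    - JW a 0 * JW b 2 * JW c 1 - JW a 2 * JW b 1 * JW c 0 - JW a 1 * JW b 0 * JW c 2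

lemma mapc_mul (A B : Matrix Q3 Q3 ℤ) :
    (A * B).map (Int.cast : ℤ → ℂ) = A.map Int.cast * B.map Int.cast :=
  Matrix.map_mul (f := Int.castRingHom ℂ)

lemma mapc_add (A B : Matrix Q3 Q3 ℤ) :
    (A + B).map (Int.cast : ℤ → ℂ) = A.map Int.cast + B.map Int.cast :=
  Matrix.map_add _ (by push_cast; simp) _ _

lemma mapc_sub (A B : Matrix Q3 Q3 ℤ) :
    (A - B).map (Int.cast : ℤ → ℂ) = A.map Int.cast - B.map Int.cast :=
  Matrix.map_sub _ (by push_cast; simp) _ _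

lemma L2 (a b : Fin 3) :
    Jdot a b = (1 / 4 : ℂ) • (DW a b).map (Int.cast : ℤ → ℂ) := by
  simp only [Jdot, Fin.sum_univ_three, DW, mapc_add, mapc_sub, mapc_mul, L1,
    Matrix.smul_mul, Matrix.mul_smul, smul_smul, u]
  simp only [Matrix.cons_val_zero, Matrix.cons_val_one, Matrix.head_cons, Matrix.cons_val_two,
    Matrix.tail_cons]
  match_scalars <;> ring_nf <;> simp [Complex.I_sq] <;> ring_nf

lemma L3 (a b c : Fin 3) :
    Jcross a b c = (Complex.I / 8) • (KW a b c).map (Int.cast : ℤ → ℂ) := by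
  simp only [Jcross, Fin.sum_univ_three, KW, mapc_add, mapc_sub, mapc_mul, L1,
    Matrix.smul_mul, Matrix.mul_smul, smul_smul, u, levi]
  norm_num only
  simp only [Matrix.cons_val_zero, Matrix.cons_val_one, Matrix.head_cons, Matrix.cons_val_two,
    Matrix.tail_cons]
  match_scalars <;> ring_nf <;> simp [Complex.I_sq, Prod.ext_iff] <;> ring_nf

def q8 : Q3 → Fin 8 := fun x => ⟨x.1.val * 4 + x.2.1.val * 2 + x.2.2.val, by omega⟩

def litK012 : Matrix (Fin 8) (Fin 8) ℤ :=
  !![0, 0, 0, 0, 0, 0, 0, 0;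
    0, 0, 2, 0, (-2), 0, 0, 0;
    0, (-2), 0, 0, 2, 0, 0, 0;
    0, 0, 0, 0, 0, (-2), 2, 0;
    0, 2, (-2), 0, 0, 0, 0, 0;
    0, 0, 0, 2, 0, 0, (-2), 0;
    0, 0, 0, (-2), 0, 2, 0, 0;
    0, 0, 0, 0, 0, 0, 0, 0]

def litK021 : Matrix (Fin 8) (Fin 8) ℤ :=
  !![0, 0, 0, 0, 0, 0, 0, 0;
    0, 0, (-2), 0, 2, 0, 0, 0;
    0, 2, 0, 0, (-2), 0, 0, 0;
    0, 0, 0, 0, 0, 2, (-2), 0;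
    0, (-2), 2, 0, 0, 0, 0, 0;
    0, 0, 0, (-2), 0, 0, 2, 0;
    0, 0, 0, 2, 0, (-2), 0, 0;
    0, 0, 0, 0, 0, 0, 0, 0]

def litK102 : Matrix (Fin 8) (Fin 8) ℤ :=
  !![0, 0, 0, 0, 0, 0, 0, 0;
    0, 0, (-2), 0, 2, 0, 0, 0;
    0, 2, 0, 0, (-2), 0, 0, 0;
    0, 0, 0, 0, 0, 2, (-2), 0;
    0, (-2), 2, 0, 0, 0, 0, 0;
    0, 0, 0, (-2), 0, 0, 2, 0;
    0, 0, 0, 2, 0, (-2), 0, 0;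
    0, 0, 0, 0, 0, 0, 0, 0]

def litK120 : Matrix (Fin 8) (Fin 8) ℤ :=
  !![0, 0, 0, 0, 0, 0, 0, 0;
    0, 0, 2, 0, (-2), 0, 0, 0;
    0, (-2), 0, 0, 2, 0, 0, 0;
    0, 0, 0, 0, 0, (-2), 2, 0;
    0, 2, (-2), 0, 0, 0, 0, 0;
    0, 0, 0, 2, 0, 0, (-2), 0;
    0, 0, 0, (-2), 0, 2, 0, 0;
    0, 0, 0, 0, 0, 0, 0, 0]

def litK201 : Matrix (Fin 8) (Fin 8) ℤ :=
  !![0, 0, 0, 0, 0, 0, 0, 0;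
    0, 0, 2, 0, (-2), 0, 0, 0;
    0, (-2), 0, 0, 2, 0, 0, 0;
    0, 0, 0, 0, 0, (-2), 2, 0;
    0, 2, (-2), 0, 0, 0, 0, 0;
    0, 0, 0, 2, 0, 0, (-2), 0;
    0, 0, 0, (-2), 0, 2, 0, 0;
    0, 0, 0, 0, 0, 0, 0, 0]

def litK210 : Matrix (Fin 8) (Fin 8) ℤ :=
  !![0, 0, 0, 0, 0, 0, 0, 0;
    0, 0, (-2), 0, 2, 0, 0, 0;
    0, 2, 0, 0, (-2), 0, 0, 0;
    0, 0, 0, 0, 0, 2, (-2), 0;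
    0, (-2), 2, 0, 0, 0, 0, 0;
    0, 0, 0, (-2), 0, 0, 2, 0;
    0, 0, 0, 2, 0, (-2), 0, 0;
    0, 0, 0, 0, 0, 0, 0, 0]

set_option maxHeartbeats 2000000 in
lemma hK012 : KW 0 1 2 = litK012.submatrix q8 q8 := by decide

set_option maxHeartbeats 2000000 in
lemma core012 : DW 1 2 * KW 0 1 2 - KW 0 1 2 * DW 1 2 =
    (4 : ℤ) • (DW 0 2 - DW 0 1) := by
  rw [hK012]; decide

set_option maxHeartbeats 2000000 in
lemma hK021 : KW 0 2 1 = litK021.submatrix q8 q8 := by decide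

set_option maxHeartbeats 2000000 in
lemma core021 : DW 2 1 * KW 0 2 1 - KW 0 2 1 * DW 2 1 =
    (4 : ℤ) • (DW 0 1 - DW 0 2) := by
  rw [hK021]; decide

set_option maxHeartbeats 2000000 in
lemma hK102 : KW 1 0 2 = litK102.submatrix q8 q8 := by decide

set_option maxHeartbeats 2000000 in
lemma core102 : DW 0 2 * KW 1 0 2 - KW 1 0 2 * DW 0 2 =
    (4 : ℤ) • (DW 1 2 - DW 1 0) := by
  rw [hK102]; decide

set_option maxHeartbeats 2000000 in
lemma hK120 : KW 1 2 0 = litK120.submatrix q8 q8 := by decide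

set_option maxHeartbeats 2000000 in
lemma core120 : DW 2 0 * KW 1 2 0 - KW 1 2 0 * DW 2 0 =
    (4 : ℤ) • (DW 1 0 - DW 1 2) := by
  rw [hK120]; decide

set_option maxHeartbeats 2000000 in
lemma hK201 : KW 2 0 1 = litK201.submatrix q8 q8 := by decide

set_option maxHeartbeats 2000000 in
lemma core201 : DW 0 1 * KW 2 0 1 - KW 2 0 1 * DW 0 1 =
    (4 : ℤ) • (DW 2 1 - DW 2 0) := by
  rw [hK201]; decide

set_option maxHeartbeats 2000000 in
lemma hK210 : KW 2 1 0 = litK210.submatrix q8 q8 := by decide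

set_option maxHeartbeats 2000000 in
lemma core210 : DW 1 0 * KW 2 1 0 - KW 2 1 0 * DW 1 0 =
    (4 : ℤ) • (DW 2 0 - DW 2 1) := by
  rw [hK210]; decide


lemma int_smul_map (n : ℤ) (M : Matrix Q3 Q3 ℤ) :
    ((n • M).map (Int.cast : ℤ → ℂ)) = (n : ℂ) • M.map Int.cast := by
  ext i j
  simp only [Matrix.map_apply, Matrix.smul_apply, smul_eq_mul]
  push_cast
  ring

lemma main_general (a b c : Fin 3)
    (h : DW b c * KW a b c - KW a b c * DW b c = (4 : ℤ) • (DW a c - DW a b)) :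
    Jdot b c * Jcross a b c - Jcross a b c * Jdot b c =
      (Complex.I / 2) • (Jdot a c - Jdot a b) := by
  have h2 := congrArg (fun M : Matrix Q3 Q3 ℤ => M.map (Int.cast : ℤ → ℂ)) h
  simp only [mapc_sub, mapc_mul, int_smul_map] at h2
  rw [L2, L2, L2, L3]
  rw [Matrix.smul_mul, Matrix.mul_smul, Matrix.smul_mul, Matrix.mul_smul,
    smul_smul, smul_smul]
  rw [eq_add_of_sub_eq h2]
  match_scalars <;> (push_cast; ring)

set_option maxHeartbeats 1000000 in
lemma dispatch (a b c : Fin 3)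
    (hab : a ≠ b) (hbc : b ≠ c) (hac : a ≠ c) :
    Jdot b c * Jcross a b c - Jcross a b c * Jdot b c =
      (Complex.I / 2) • (Jdot a c - Jdot a b) := by
  fin_cases a <;> fin_cases b <;> fin_cases c
  · exact absurd rfl hab
  · exact absurd rfl hab
  · exact absurd rfl hab
  · exact absurd rfl hac
  · exact absurd rfl hbc
  · exact main_general _ _ _ core012
  · exact absurd rfl hac
  · exact main_general _ _ _ core021
  · exact absurd rfl hbc
  · exact absurd rfl hbc
  · exact absurd rfl hac
  · exact main_general _ _ _ core102
  · exact absurd rfl hab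
  · exact absurd rfl hab
  · exact absurd rfl hab
  · exact main_general _ _ _ core120
  · exact absurd rfl hac
  · exact absurd rfl hbc
  · exact absurd rfl hbc
  · exact main_general _ _ _ core201
  · exact absurd rfl hac
  · exact main_general _ _ _ core210
  · exact absurd rfl hbc
  · exact absurd rfl hac
  · exact absurd rfl hab
  · exact absurd rfl hab
  · exact absurd rfl hab

/-- The 'order 2 with order 3' identity: for pairwise distinct particles
`a, b, c`, `[J_b·J_c, (J_a × J_b)·J_c] = (i/2) J_a·(J_c − J_b)`, where
`J_a·(J_c − J_b) := J_a·J_c − J_a·J_b`. -/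
theorem order2_order3_identity (a b c : Fin 3)
    (hab : a ≠ b) (hbc : b ≠ c) (hac : a ≠ c) :
    Jdot b c * Jcross a b c - Jcross a b c * Jdot b c =
      (Complex.I / 2) • (Jdot a c - Jdot a b) := by
  exact dispatch a b c hab hbc hac
end

section
/- For all real α and β, the volume distortion factor satisfies (2/9)(cos α − sin α)⁴ (cos α + sin α)² sin² β ≤ 64/243, and equality holds for β = π/2 and α = arctan(2√2 − 3). Hence the best possible primitive quantum reference frame for encoding a single spin state shrinks the Bloch ball by the factor 64/243 ≈ 26%, achieved with orthogonal reference frame spins and a small amount of entanglement. -/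
/-- The volume distortion factor
`(2/9)(cos α − sin α)⁴ (cos α + sin α)² sin² β` of the Bloch ball under the
encoding induced by the canonical primitive quantum reference frame
`|QRF(α,β,δ=0)⟩` is at most `64/243`, with equality for `β = π/2` and
`α = arctan(2√2 − 3)`: the best primitive reference frame shrinks the Bloch
ball by the factor `64/243 ≈ 26%`. -/
theorem volume_distortion_max :
    (∀ α β : ℝ,
      (2 / 9) * (Real.cos α - Real.sin α) ^ 4 * (Real.cos α + Real.sin α) ^ 2 *
        Real.sin β ^ 2 ≤ 64 / 243) ∧
    (2 / 9) * (Real.cos (Real.arctan (2 * Real.sqrt 2 - 3)) -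
          Real.sin (Real.arctan (2 * Real.sqrt 2 - 3))) ^ 4 *
        (Real.cos (Real.arctan (2 * Real.sqrt 2 - 3)) +
          Real.sin (Real.arctan (2 * Real.sqrt 2 - 3))) ^ 2 *
        Real.sin (Real.pi / 2) ^ 2 = 64 / 243 := by
  constructor
  · intro α β
    have h2 : Real.sin β ^ 2 ≤ 1 := Real.sin_sq_le_one β
    have h3 : (0:ℝ) ≤ Real.sin β ^ 2 := sq_nonneg _
    set c := Real.cos α
    set s := Real.sin α
    have h1 : s ^ 2 + c ^ 2 = 1 := Real.sin_sq_add_cos_sq α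
    have heq : (c - s) ^ 4 * (c + s) ^ 2 = (1 - 2*c*s) ^ 2 * (1 + 2*c*s) := by
      linear_combination (c^4 - 2*c^3*s - 2*c^2*s^2 + c^2 - 2*c*s^3 - 2*c*s + s^4 + s^2 + 1) * h1
    have ht1 : 2*c*s ≤ 1 := by nlinarith [sq_nonneg (c - s)]
    have key : (c - s) ^ 4 * (c + s) ^ 2 ≤ 32 / 27 := by
      rw [heq]
      nlinarith [sq_nonneg (3*(2*c*s) + 1), ht1]
    have hnn : (0:ℝ) ≤ (c - s) ^ 4 * (c + s) ^ 2 :=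
      mul_nonneg (by positivity) (sq_nonneg _)
    nlinarith [mul_le_mul key h2 h3 (by norm_num : (0:ℝ) ≤ 32/27)]
  · have hr : Real.sqrt 2 ^ 2 = 2 := Real.sq_sqrt (by norm_num)
    set r := Real.sqrt 2 with hrdef
    have hcos := Real.cos_arctan (2*r - 3)
    have hsin := Real.sin_arctan (2*r - 3)
    have hpos : (0:ℝ) < 1 + (2*r - 3) ^ 2 := by positivity
    set u : ℝ := Real.sqrt (1 + (2*r - 3) ^ 2) with hu
    have hu2 : u ^ 2 = 1 + (2*r - 3) ^ 2 := Real.sq_sqrt (le_of_lt hpos)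
    have hu0 : (0:ℝ) < u := Real.sqrt_pos.mpr hpos
    have hune : u ≠ 0 := ne_of_gt hu0
    rw [Real.sin_pi_div_two, hcos, hsin]
    have hu6 : u ^ 6 = (1 + (2*r - 3) ^ 2) ^ 3 := by
      have h : u ^ 6 = (u ^ 2) ^ 3 := by ring
      rw [h, hu2]
    field_simp
    linear_combination (39168 - 41472*r - 8064*r^2 + 20736*r^3 - 5760*r^4) * hr - 576 * hu6
end

section
/- Let |Ψ⟩ := |QRF(α,β,δ)⟩ ⊗ |ψ⁻⟩ ∈ (ℂ²)^{⊗4}, where |QRF(α,β,δ)⟩ = cos α |0⟩⊗(cos(β/2)|0⟩ + e^{iδ} sin(β/2)|1⟩) + sin α |1⟩⊗(sin(β/2)|0⟩ − e^{−iδ} cos(β/2)|1⟩) occupies qubits 1,2 and the singlet |ψ⁻⟩ = (|01⟩−|10⟩)/√2 occupies qubits 3,4. Let Π_2 be the orthogonal projector onto the span of (|010⟩−|100⟩)/√2, (2|001⟩−|010⟩−|100⟩)/√6, (|011⟩−|101⟩)/√2, (−2|110⟩+|101⟩+|011⟩)/√6 in the first three qubits. Then the probability of projecting onto the J=1/2 sector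 is ⟨Ψ|(Π_2 ⊗ I₂)|Ψ⟩ = 1/2 − (1/6)(cos β − 2 cos α cos β cos δ sin α + cos δ sin 2α), and correspondingly ⟨Ψ|((I₈ − Π_2) ⊗ I₂)|Ψ⟩ = 1/2 + (1/6)(cos β − 2 cos α cos β cos δ sin α + cos δ sin 2α). -/
open Matrix Kronecker

/-- The orthogonal projector `Π₂` onto the total angular momentum `J = 1/2`
sector of three qubits, the span of the orthonormal vectors `|1/2,0,0⟩,
|1/2,0,1⟩, |1/2,1,0⟩, |1/2,1,1⟩`. -/
noncomputable def Pi2 : Matrix Q3 Q3 ℂ :=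
  ∑ i : Fin 8, if 4 ≤ (i : ℕ) then
    Matrix.vecMulVec (sectorBasis i) (star (sectorBasis i)) else 0

/-- The index type of `(ℂ²)^{⊗4}`. -/
abbrev Q4 : Type := Fin 2 × Fin 2 × Fin 2 × Fin 2

/-- The canonical primitive quantum reference frame state
`|QRF(α,β,δ)⟩ = cos α |0⟩⊗(cos(β/2)|0⟩ + e^{iδ} sin(β/2)|1⟩)
 + sin α |1⟩⊗(sin(β/2)|0⟩ − e^{−iδ} cos(β/2)|1⟩)` on two qubits. -/
noncomputable def qrfVec (α β δ : ℝ) : Fin 2 × Fin 2 → ℂ := fun x =>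
  if x = (0, 0) then Real.cos α * Real.cos (β / 2)
  else if x = (0, 1) then Real.cos α * Complex.exp (Complex.I * δ) * Real.sin (β / 2)
  else if x = (1, 0) then Real.sin α * Real.sin (β / 2)
  else -(Real.sin α * Complex.exp (-(Complex.I * δ)) * Real.cos (β / 2))

/-- The singlet state `|ψ⁻⟩ = (|01⟩ − |10⟩)/√2` on two qubits. -/
noncomputable def singletVec : Fin 2 × Fin 2 → ℂ := fun x =>
  if x = (0, 1) then (Real.sqrt 2 : ℂ)⁻¹
  else if x = (1, 0) then -(Real.sqrt 2 : ℂ)⁻¹ else 0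

/-- The four-qubit state `|Ψ⟩ = |QRF(α,β,δ)⟩ ⊗ |ψ⁻⟩` (reference frame on
qubits 1,2 and singlet on qubits 3,4). -/
noncomputable def totalVec (α β δ : ℝ) : Q4 → ℂ := fun x =>
  qrfVec α β δ (x.1, x.2.1) * singletVec (x.2.2.1, x.2.2.2)

/-- The projector `Π₂ ⊗ I₂` acting as `Π₂` on qubits 1,2,3 and as the identity
on qubit 4. -/
noncomputable def Pi2ext : Matrix Q4 Q4 ℂ :=
  Matrix.of fun x y =>
    Pi2 (x.1, x.2.1, x.2.2.1) (y.1, y.2.1, y.2.2.1) *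
      (if x.2.2.2 = y.2.2.2 then 1 else 0)


/-! The singlet on qubits 3,4 leaves qubit 3 maximally mixed, so
`⟨Ψ|(Π₂ ⊗ I₂)|Ψ⟩ = ½ ∑_c ⟨φ c|Π₂|φ c⟩` with `φ = |QRF(α,β,δ)⟩`. Expanding `Π₂` in its four basis
vectors gives `(‖φ‖² + |φ₀₁ - φ₁₀|²) / 3`, i.e. `1/3` plus `2/3` of the singlet fidelity of `φ`,
and for the reference-frame state `|φ₀₁ - φ₁₀|² = sin²(β/2) (1 - sin 2α cos δ)`. -/

open Complex

noncomputable def tensorSinglet (φ : Fin 2 × Fin 2 → ℂ) : Q4 → ℂ := fun x =>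
  φ (x.1, x.2.1) * singletVec (x.2.2.1, x.2.2.2)

def tensorKet (φ : Fin 2 × Fin 2 → ℂ) (c : Fin 2) : Q3 → ℂ := fun x =>
  φ (x.1, x.2.1) * if x.2.2 = c then 1 else 0

def tensorOne (P : Matrix Q3 Q3 ℂ) : Matrix Q4 Q4 ℂ :=
  Matrix.of fun x y =>
    P (x.1, x.2.1, x.2.2.1) (y.1, y.2.1, y.2.2.1) * if x.2.2.2 = y.2.2.2 then 1 else 0

lemma inv_sqrt_two_sq : ((Real.sqrt 2 : ℂ))⁻¹ ^ 2 = 1 / 2 := by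
  rw [inv_pow, ← ofReal_pow, Real.sq_sqrt zero_le_two]
  norm_num

lemma inv_sqrt_six_sq : ((Real.sqrt 6 : ℂ))⁻¹ ^ 2 = 1 / 6 := by
  rw [inv_pow, ← ofReal_pow, Real.sq_sqrt (by norm_num)]
  norm_num

lemma star_tensorSinglet_dotProduct_self (φ : Fin 2 × Fin 2 → ℂ) :
    star (tensorSinglet φ) ⬝ᵥ tensorSinglet φ = (∑ ab, normSq (φ ab) : ℝ) := by
  simp [dotProduct, Fintype.sum_prod_type, tensorSinglet, singletVec, normSq_eq_conj_mul_self]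
  -- `ring_nf` gathers the two singlet amplitudes into `(√2)⁻¹ ^ 2`
  ring_nf
  rw [inv_sqrt_two_sq]
  ring

lemma star_tensorSinglet_dotProduct_tensorOne_mulVec (P : Matrix Q3 Q3 ℂ)
    (φ : Fin 2 × Fin 2 → ℂ) :
    star (tensorSinglet φ) ⬝ᵥ tensorOne P *ᵥ tensorSinglet φ =
      1 / 2 * ∑ c, star (tensorKet φ c) ⬝ᵥ P *ᵥ tensorKet φ c := by
  simp [dotProduct, mulVec, Fintype.sum_prod_type, tensorSinglet, tensorKet, tensorOne,
    singletVec]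
  ring_nf
  rw [inv_sqrt_two_sq]
  ring

lemma star_dotProduct_vecMulVec_star_mulVec {ι : Type*} [Fintype ι] (v x : ι → ℂ) :
    star x ⬝ᵥ vecMulVec v (star v) *ᵥ x = normSq (star v ⬝ᵥ x) := by
  rw [vecMulVec_mulVec, normSq_eq_conj_mul_self, star_dotProduct]
  simp [mul_comm]

lemma star_dotProduct_Pi2_mulVec (x : Q3 → ℂ) :
    star x ⬝ᵥ Pi2 *ᵥ x =
      ∑ i : Fin 8, if 4 ≤ (i : ℕ) then (normSq (star (sectorBasis i) ⬝ᵥ x) : ℂ) else 0 := by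
  simp only [Pi2, sum_mulVec, dotProduct_sum, apply_ite (· *ᵥ x), apply_ite (star x ⬝ᵥ ·),
    zero_mulVec, dotProduct_zero, star_dotProduct_vecMulVec_star_mulVec]

lemma half_sum_star_tensorKet_dotProduct_Pi2_mulVec (φ : Fin 2 × Fin 2 → ℂ) :
    1 / 2 * ∑ c, star (tensorKet φ c) ⬝ᵥ Pi2 *ᵥ tensorKet φ c =
      ((∑ ab, normSq (φ ab) + normSq (φ (0, 1) - φ (1, 0))) / 3 : ℝ) := by
  simp only [star_dotProduct_Pi2_mulVec]
  simp [Fin.sum_univ_eight, sectorBasis, dotProduct, tensorKet, ket3, Fintype.sum_prod_type,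
    normSq_eq_conj_mul_self, map_ofNat]
  ring_nf
  rw [inv_sqrt_two_sq, inv_sqrt_six_sq]
  ring

lemma sum_normSq_qrfVec (α β δ : ℝ) : ∑ ab, normSq (qrfVec α β δ ab) = 1 := by
  simp [qrfVec, Fintype.sum_prod_type, normSq_apply, exp_re, exp_im, -ofReal_cos,
    -ofReal_sin]
  linear_combination
    (Real.cos α ^ 2 * Real.sin (β / 2) ^ 2 + Real.sin α ^ 2 * Real.cos (β / 2) ^ 2) *
        Real.sin_sq_add_cos_sq δ +
      (Real.cos α ^ 2 + Real.sin α ^ 2) * Real.sin_sq_add_cos_sq (β / 2) +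
      Real.sin_sq_add_cos_sq α

lemma normSq_qrfVec_sub (α β δ : ℝ) :
    normSq (qrfVec α β δ (0, 1) - qrfVec α β δ (1, 0)) =
      Real.sin (β / 2) ^ 2 * (1 - Real.sin (2 * α) * Real.cos δ) := by
  simp [qrfVec, normSq_apply, exp_re, exp_im, -ofReal_cos, -ofReal_sin]
  rw [Real.sin_two_mul]
  linear_combination
    Real.sin (β / 2) ^ 2 * (Real.cos α ^ 2 * Real.sin_sq_add_cos_sq δ + Real.sin_sq_add_cos_sq α)

/-- The probability of projecting `|Ψ⟩ = |QRF(α,β,δ)⟩ ⊗ |ψ⁻⟩` onto the `J = 1/2`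
sector is `⟨Ψ|(Π₂ ⊗ I₂)|Ψ⟩ = 1/2 − (1/6)(cos β − 2 cos α cos β cos δ sin α + cos δ sin 2α)`,
and onto its complement `⟨Ψ|((I₈ − Π₂) ⊗ I₂)|Ψ⟩ = 1/2 + (1/6)(…)`. -/
theorem sector_projection_probabilities (α β δ : ℝ) :
    star (totalVec α β δ) ⬝ᵥ (Pi2ext.mulVec (totalVec α β δ)) =
      ((1 / 2 - (1 / 6) * (Real.cos β - 2 * Real.cos α * Real.cos β * Real.cos δ * Real.sin α +
        Real.cos δ * Real.sin (2 * α)) : ℝ) : ℂ) ∧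
    star (totalVec α β δ) ⬝ᵥ (((1 : Matrix Q4 Q4 ℂ) - Pi2ext).mulVec (totalVec α β δ)) =
      ((1 / 2 + (1 / 6) * (Real.cos β - 2 * Real.cos α * Real.cos β * Real.cos δ * Real.sin α +
        Real.cos δ * Real.sin (2 * α)) : ℝ) : ℂ) := by
  have hΨ : totalVec α β δ = tensorSinglet (qrfVec α β δ) := rfl
  have hnorm : star (totalVec α β δ) ⬝ᵥ totalVec α β δ = 1 := by
    rw [hΨ, star_tensorSinglet_dotProduct_self, sum_normSq_qrfVec, ofReal_one]
  have hcos : Real.cos β = 1 - 2 * Real.sin (β / 2) ^ 2 := by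
    have h := Real.cos_two_mul (β / 2)
    rw [show 2 * (β / 2) = β by ring] at h
    linear_combination h + 2 * Real.sin_sq_add_cos_sq (β / 2)
  have hsector : star (totalVec α β δ) ⬝ᵥ Pi2ext *ᵥ totalVec α β δ =
      ((1 / 2 - (1 / 6) * (Real.cos β - 2 * Real.cos α * Real.cos β * Real.cos δ * Real.sin α +
        Real.cos δ * Real.sin (2 * α)) : ℝ) : ℂ) := by
    rw [hΨ, show Pi2ext = tensorOne Pi2 from rfl, star_tensorSinglet_dotProduct_tensorOne_mulVec,
      half_sum_star_tensorKet_dotProduct_Pi2_mulVec, sum_normSq_qrfVec, normSq_qrfVec_sub, hcos,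
      Real.sin_two_mul]
    congr 1
    ring
  refine ⟨hsector, ?_⟩
  rw [sub_mulVec, one_mulVec, dotProduct_sub, hnorm, hsector]
  push_cast
  ring
end
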